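/- arXiv:2505.00075 — 10 statements merged into one kernel-verified Lean document; each statement's English description precedes it below -/
import Mathlib

section
/- (Locations lie in the convex hull of the poles.) Let a₀,…,a_N ∈ ℝ³ be distinct, λ₀,…,λ_N > 0, and define ζ(x) = Σᵢ₌₀ᴺ λᵢ² (x − aᵢ)/‖x − aᵢ‖² on ℝ³ ∖ {a₀,…,a_N}. If x ∈ ℝ³ ∖ {a₀,…,a_N} satisfies ζ(x) = 0, then x lies in the convex hull of {a₀,…,a_N}. -/
/-- (Locations lie in the convex hull of the poles.)
For JNR data with distinct poles `a₀, …, a_N ∈ ℝ³` and weights `λ₀, …, λ_N > 0`, any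
`x` away from the poles with `ζ(x) = Σᵢ λᵢ² (x − aᵢ)/‖x − aᵢ‖² = 0` lies in the convex
hull of the poles. -/
theorem jnr_locations_mem_convexHull (N : ℕ)
    (a : Fin (N + 1) → EuclideanSpace ℝ (Fin 3)) (ha : Function.Injective a)
    (lam : Fin (N + 1) → ℝ) (hlam : ∀ i, 0 < lam i)
    (x : EuclideanSpace ℝ (Fin 3)) (hx : ∀ i, x ≠ a i)
    (hzero : ∑ i, ((lam i) ^ 2 / ‖x - a i‖ ^ 2) • (x - a i) = 0) :
    x ∈ convexHull ℝ (Set.range a) := by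
  set c : Fin (N + 1) → ℝ := fun i => (lam i) ^ 2 / ‖x - a i‖ ^ 2 with hc
  have hcpos : ∀ i, 0 < c i := by
    intro i
    exact div_pos (pow_pos (hlam i) 2)
      (pow_pos (norm_pos_iff.mpr (sub_ne_zero.mpr (hx i))) 2)
  have hspos : 0 < ∑ i, c i := Finset.sum_pos (fun i _ => hcpos i) ⟨0, Finset.mem_univ 0⟩
  have key : (∑ i, c i) • x = ∑ i, c i • a i := by
    have h := hzero
    simp only [smul_sub] at h
    rw [Finset.sum_sub_distrib, sub_eq_zero] at h
    rw [Finset.sum_smul]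
    exact h
  have hxeq : x = Finset.univ.centerMass c a := by
    rw [Finset.centerMass, ← key, inv_smul_smul₀ (ne_of_gt hspos)]
  rw [hxeq]
  exact Finset.centerMass_mem_convexHull _ (fun i _ => (hcpos i).le) hspos
    (fun i _ => Set.mem_range_self i)
end

section
/- Let N ≥ 1, let a₀,…,a_N ∈ ℝ³ be distinct, λ₀,…,λ_N > 0, and μ > 0. Suppose x* ∈ ℝ³ ∖ {a₀,…,a_N} satisfies ζ(x*) = Σᵢ₌₀ᴺ λᵢ² (x* − aᵢ)/‖x* − aᵢ‖² = 0. Then S := Σᵢ₌₀ᴺ Σⱼ₌₀ᴺ λᵢ² λⱼ² ⟨aⱼ − aᵢ, aⱼ − x*⟩ / ((‖aᵢ − x*‖² + μ²)(‖aⱼ − x*‖² + μ²)‖aⱼ − x*‖²) > 0, where ⟨·,·⟩ denotes the Euclidean inner product on ℝ³. -/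
open scoped RealInnerProductSpace

/-!
Write `dᵢ = aᵢ - x⁎`, `rᵢ = ‖dᵢ‖²`, `pᵢ = λᵢ² / (rᵢ + μ²)` and `qᵢ = λᵢ² / ((rᵢ + μ²) rᵢ)`.
Expanding `⟪dⱼ - dᵢ, dⱼ⟫ = rⱼ - ⟪dᵢ, dⱼ⟫` gives `S = (Σ pᵢ)² - ⟪Σ pᵢ dᵢ, Σ qᵢ dᵢ⟫`.
Since `pᵢ + μ² qᵢ = λᵢ² / rᵢ`, the equation `ζ(x⁎) = 0` says `Σ pᵢ dᵢ = -μ² Σ qᵢ dᵢ`,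
so `S = (Σ pᵢ)² + μ² ‖Σ qᵢ dᵢ‖² > 0`.
-/

section

variable {ι E : Type*} [Fintype ι] [NormedAddCommGroup E] [InnerProductSpace ℝ E]

theorem sum_sum_inner_sub_div_eq (w : ι → ℝ) (m : ℝ) (d : ι → E) (hd : ∀ i, d i ≠ 0)
    (hm : ∀ i, ‖d i‖ ^ 2 + m ≠ 0) :
    ∑ i, ∑ j, w i * w j * ⟪d j - d i, d j⟫ / ((‖d i‖ ^ 2 + m) * (‖d j‖ ^ 2 + m) * ‖d j‖ ^ 2) =
      (∑ i, w i / (‖d i‖ ^ 2 + m)) ^ 2 -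
        ⟪∑ i, (w i / (‖d i‖ ^ 2 + m)) • d i,
          ∑ j, (w j / ((‖d j‖ ^ 2 + m) * ‖d j‖ ^ 2)) • d j⟫ := by
  rw [sq, Finset.sum_mul_sum, sum_inner, ← Finset.sum_sub_distrib]
  refine Finset.sum_congr rfl fun i _ => ?_
  rw [inner_sum, ← Finset.sum_sub_distrib]
  refine Finset.sum_congr rfl fun j _ => ?_
  have hdj : ‖d j‖ ≠ 0 := norm_ne_zero_iff.mpr (hd j)
  have hmi := hm i
  have hmj := hm j
  rw [real_inner_smul_left, real_inner_smul_right, inner_sub_left, real_inner_self_eq_norm_sq]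
  field_simp

theorem sum_smul_add_smul_sum_eq (w : ι → ℝ) (m : ℝ) (d : ι → E)
    (hm : ∀ i, ‖d i‖ ^ 2 + m ≠ 0) :
    ∑ i, (w i / (‖d i‖ ^ 2 + m)) • d i + m • ∑ i, (w i / ((‖d i‖ ^ 2 + m) * ‖d i‖ ^ 2)) • d i =
      ∑ i, (w i / ‖d i‖ ^ 2) • d i := by
  rw [Finset.smul_sum, ← Finset.sum_add_distrib]
  refine Finset.sum_congr rfl fun i _ => ?_
  rcases eq_or_ne (d i) 0 with hdi | hdi
  · simp [hdi]
  have hdi' : ‖d i‖ ≠ 0 := norm_ne_zero_iff.mpr hdi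
  have hmi := hm i
  rw [smul_smul, ← add_smul]
  congr 1
  field_simp

theorem sum_sum_inner_sub_div_pos [Nonempty ι] (w : ι → ℝ) (hw : ∀ i, 0 < w i) (m : ℝ)
    (hm : 0 ≤ m) (d : ι → E) (hd : ∀ i, d i ≠ 0)
    (hcrit : ∑ i, (w i / ‖d i‖ ^ 2) • d i = 0) :
    0 < ∑ i, ∑ j, w i * w j * ⟪d j - d i, d j⟫ /
      ((‖d i‖ ^ 2 + m) * (‖d j‖ ^ 2 + m) * ‖d j‖ ^ 2) := by
  have hpos : ∀ i, 0 < ‖d i‖ ^ 2 + m := fun i => by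
    have := norm_pos_iff.mpr (hd i); positivity
  have hm' : ∀ i, ‖d i‖ ^ 2 + m ≠ 0 := fun i => (hpos i).ne'
  rw [sum_sum_inner_sub_div_eq w m d hd hm']
  set u := ∑ i, (w i / (‖d i‖ ^ 2 + m)) • d i
  set v := ∑ i, (w i / ((‖d i‖ ^ 2 + m) * ‖d i‖ ^ 2)) • d i
  have huv : u = -(m • v) :=
    eq_neg_of_add_eq_zero_left <| (sum_smul_add_smul_sum_eq w m d hm').trans hcrit
  have hP : 0 < ∑ i, w i / (‖d i‖ ^ 2 + m) :=
    Finset.sum_pos (fun i _ => div_pos (hw i) (hpos i)) Finset.univ_nonempty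
  rw [huv, inner_neg_left, real_inner_smul_left, real_inner_self_eq_norm_sq]
  nlinarith [mul_nonneg hm (sq_nonneg ‖v‖)]

end

theorem jnr_S_pos_general (N : ℕ)
    (a : Fin (N + 1) → EuclideanSpace ℝ (Fin 3))
    (lam : Fin (N + 1) → ℝ) (hlam : ∀ i, 0 < lam i)
    (μ : ℝ)
    (xs : EuclideanSpace ℝ (Fin 3)) (hxs : ∀ i, xs ≠ a i)
    (hzero : ∑ i, ((lam i) ^ 2 / ‖xs - a i‖ ^ 2) • (xs - a i) = 0) :
    0 < ∑ i, ∑ j,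
        (lam i) ^ 2 * (lam j) ^ 2 * (⟪a j - a i, a j - xs⟫) /
          ((‖a i - xs‖ ^ 2 + μ ^ 2) * (‖a j - xs‖ ^ 2 + μ ^ 2) * ‖a j - xs‖ ^ 2) := by
  have hcrit : ∑ i, (lam i ^ 2 / ‖a i - xs‖ ^ 2) • (a i - xs) = 0 := by
    rw [← neg_eq_zero, ← Finset.sum_neg_distrib, ← hzero]
    refine Finset.sum_congr rfl fun i _ => ?_
    rw [← smul_neg, neg_sub, norm_sub_rev]
  have h := sum_sum_inner_sub_div_pos (fun i => lam i ^ 2) (fun i => pow_pos (hlam i) 2)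
    (μ ^ 2) (sq_nonneg μ) (fun i => a i - xs) (fun i => sub_ne_zero.mpr (hxs i).symm) hcrit
  simpa only [sub_sub_sub_cancel_right] using h

/-- (Lemma on the sign of `S`.) Let `N ≥ 1`, let `a₀, …, a_N ∈ ℝ³` be
distinct, `λᵢ > 0` and `μ > 0`. If `x⁎` away from the poles satisfies
`ζ(x⁎) = Σᵢ λᵢ² (x⁎ − aᵢ)/‖x⁎ − aᵢ‖² = 0`, then
`S = Σᵢⱼ λᵢ²λⱼ² ⟨aⱼ − aᵢ, aⱼ − x⁎⟩ / ((‖aᵢ − x⁎‖² + μ²)(‖aⱼ − x⁎‖² + μ²)‖aⱼ − x⁎‖²) > 0`. -/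
theorem jnr_S_pos (N : ℕ) (hN : 1 ≤ N)
    (a : Fin (N + 1) → EuclideanSpace ℝ (Fin 3)) (ha : Function.Injective a)
    (lam : Fin (N + 1) → ℝ) (hlam : ∀ i, 0 < lam i)
    (μ : ℝ) (hμ : 0 < μ)
    (xs : EuclideanSpace ℝ (Fin 3)) (hxs : ∀ i, xs ≠ a i)
    (hzero : ∑ i, ((lam i) ^ 2 / ‖xs - a i‖ ^ 2) • (xs - a i) = 0) :
    0 < ∑ i, ∑ j,
        (lam i) ^ 2 * (lam j) ^ 2 * (⟪a j - a i, a j - xs⟫) /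
          ((‖a i - xs‖ ^ 2 + μ ^ 2) * (‖a j - xs‖ ^ 2 + μ ^ 2) * ‖a j - xs‖ ^ 2) :=
  jnr_S_pos_general N a lam hlam μ xs hxs hzero
end

section
/- Let N ≥ 1, let v₀, v₁, …, v_N ∈ ℝ³ be nonzero vectors with Σᵢ₌₀ᴺ vᵢ = 0, let λ₀,…,λ_N > 0 and μ > 0. Then q := Σᵢ₌₀ᴺ Σⱼ₌₀ᴺ ⟨vᵢ, vⱼ⟩ (λᵢ⁴/‖vᵢ‖²) / ((λᵢ⁴/‖vᵢ‖² + μ²)(λⱼ⁴/‖vⱼ‖² + μ²)) ≤ 0. -/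
open scoped RealInnerProductSpace

/-- Let `N ≥ 1`, let `v₀, …, v_N ∈ ℝ³` be nonzero vectors summing to `0`,
let `λᵢ > 0` and `μ > 0`. Then
`q = Σᵢⱼ ⟨vᵢ, vⱼ⟩ (λᵢ⁴/‖vᵢ‖²) / ((λᵢ⁴/‖vᵢ‖² + μ²)(λⱼ⁴/‖vⱼ‖² + μ²)) ≤ 0`. -/
theorem jnr_q_nonpos (N : ℕ) (hN : 1 ≤ N)
    (v : Fin (N + 1) → EuclideanSpace ℝ (Fin 3)) (hv : ∀ i, v i ≠ 0)
    (hsum : ∑ i, v i = 0)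
    (lam : Fin (N + 1) → ℝ) (hlam : ∀ i, 0 < lam i)
    (μ : ℝ) (hμ : 0 < μ) :
    ∑ i, ∑ j,
        (⟪v i, v j⟫) * ((lam i) ^ 4 / ‖v i‖ ^ 2) /
          (((lam i) ^ 4 / ‖v i‖ ^ 2 + μ ^ 2) * ((lam j) ^ 4 / ‖v j‖ ^ 2 + μ ^ 2)) ≤ 0 := by
  set c : Fin (N + 1) → ℝ := fun i => lam i ^ 4 / ‖v i‖ ^ 2 with hc
  set d : Fin (N + 1) → ℝ := fun i => c i + μ ^ 2 with hd
  have hd0 : ∀ i, 0 < d i := by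
    intro i
    have hc0 : 0 ≤ c i := by
      have : (0:ℝ) ≤ lam i ^ 4 := by positivity
      exact div_nonneg this (by positivity)
    simp only [hd]
    nlinarith
  set w : EuclideanSpace ℝ (Fin 3) := ∑ j, (d j)⁻¹ • v j with hw
  have key : ∀ i j, ⟪v i, v j⟫ * c i / (d i * d j)
      = ⟪(c i / d i) • v i, (d j)⁻¹ • v j⟫ := by
    intro i j
    rw [real_inner_smul_left, real_inner_smul_right]
    field_simp
  have hrw : ∑ i, ∑ j, ⟪v i, v j⟫ * c i / (d i * d j)
      = ⟪∑ i, (c i / d i) • v i, w⟫ := by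
    rw [hw, sum_inner]
    refine Finset.sum_congr rfl fun i _ => ?_
    rw [inner_sum]
    exact Finset.sum_congr rfl fun j _ => key i j
  have hsplit : ∑ i, (c i / d i) • v i = (-(μ ^ 2)) • w := by
    have h1 : ∀ i, (c i / d i) • v i = v i - (μ ^ 2) • ((d i)⁻¹ • v i) := by
      intro i
      have hdi : d i ≠ 0 := (hd0 i).ne'
      have h2 : c i / d i = 1 - μ ^ 2 * (d i)⁻¹ := by
        field_simp
        simp only [hd]
        ring
      rw [h2, sub_smul, one_smul, smul_smul]
    simp_rw [h1]
    rw [Finset.sum_sub_distrib, hsum, ← Finset.smul_sum, ← hw, zero_sub, neg_smul]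
  calc ∑ i, ∑ j, ⟪v i, v j⟫ * c i / (d i * d j)
      = ⟪∑ i, (c i / d i) • v i, w⟫ := hrw
    _ = -(μ ^ 2) * ‖w‖ ^ 2 := by
        rw [hsplit, real_inner_smul_left, real_inner_self_eq_norm_sq]
    _ ≤ 0 := by nlinarith [sq_nonneg ‖w‖, sq_nonneg μ]
end

section
/- Identify ℝ³ with the pure imaginary quaternions. Let a₀,…,a_N be distinct pure imaginary quaternions, λ₀,…,λ_N > 0, and μ > 0. For pure imaginary x not equal to any aᵢ, let ζ(x) = Σᵢ₌₀ᴺ λᵢ²(x − aᵢ)/‖x − aᵢ‖², ρ(μ)(x) = Σᵢ₌₀ᴺ λᵢ²/‖x − aᵢ + μ‖², Ψ(μ)(x) = Σᵢ,ⱼ λᵢ²λⱼ² (x − aᵢ + μ)·conj(x − aⱼ + μ)·(x − aⱼ) / (‖x − aᵢ + μ‖² ‖x − aⱼ + μ‖² ‖x − aⱼ‖²), and Ξ(μ)(x) = Σᵢ,ⱼ μ λᵢ²λⱼ² (aⱼ − aᵢ)·(x − aⱼ) / (‖x − aᵢ + μ‖² ‖x − aⱼ + μ‖² ‖x − aⱼ‖²),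 where all products are quaternion products and μ denotes the real quaternion μ·1. Then Ψ(μ)(x) = ρ(μ)(x)·ζ(x) + Ξ(μ)(x). -/
/-!
For pure imaginary `w` one has `star w = -w` and `w * w = -‖w‖²`, so with `uᵢ = x - aᵢ` each
summand of `Ψ` splits as `(uᵢ + μ) * star (uⱼ + μ) * uⱼ = μ² uⱼ + ‖uⱼ‖² uᵢ + μ (aⱼ - aᵢ) uⱼ`.
The last part is the summand of `Ξ`. Swapping `i` and `j` in the middle part turns it into a
multiple of `uⱼ`, and the two remaining `uⱼ` terms combine into the summand of `ρ • ζ` because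
`‖uⱼ + μ‖² = ‖uⱼ‖² + μ²`.
-/

/-- The JNR function `ζ(x) = Σᵢ λᵢ² (x − aᵢ)/‖x − aᵢ‖²`, quaternion-valued. -/
noncomputable def jnrZeta (N : ℕ) (a : Fin (N + 1) → Quaternion ℝ)
    (lam : Fin (N + 1) → ℝ) (x : Quaternion ℝ) : Quaternion ℝ :=
  ∑ i, ((lam i) ^ 2 / ‖x - a i‖ ^ 2) • (x - a i)

/-- `ρ(μ)(x) = Σᵢ λᵢ²/‖x − aᵢ + μ‖²`. -/
noncomputable def jnrRho (N : ℕ) (a : Fin (N + 1) → Quaternion ℝ)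
    (lam : Fin (N + 1) → ℝ) (μ : ℝ) (x : Quaternion ℝ) : ℝ :=
  ∑ i, (lam i) ^ 2 / ‖x - a i + (μ : Quaternion ℝ)‖ ^ 2

/-- `Ψ(μ)(x) = Σᵢⱼ λᵢ²λⱼ² (x − aᵢ + μ)·conj(x − aⱼ + μ)·(x − aⱼ)
/(‖x − aᵢ + μ‖²‖x − aⱼ + μ‖²‖x − aⱼ‖²)`, with quaternion products. -/
noncomputable def jnrPsi (N : ℕ) (a : Fin (N + 1) → Quaternion ℝ)
    (lam : Fin (N + 1) → ℝ) (μ : ℝ) (x : Quaternion ℝ) : Quaternion ℝ :=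
  ∑ i, ∑ j,
    ((lam i) ^ 2 * (lam j) ^ 2 /
        (‖x - a i + (μ : Quaternion ℝ)‖ ^ 2 * ‖x - a j + (μ : Quaternion ℝ)‖ ^ 2 *
          ‖x - a j‖ ^ 2)) •
      ((x - a i + (μ : Quaternion ℝ)) * star (x - a j + (μ : Quaternion ℝ)) * (x - a j))

/-- `Ξ(μ)(x) = Σᵢⱼ μλᵢ²λⱼ² (aⱼ − aᵢ)·(x − aⱼ)/(‖x − aᵢ + μ‖²‖x − aⱼ + μ‖²‖x − aⱼ‖²)`. -/
noncomputable def jnrXi (N : ℕ) (a : Fin (N + 1) → Quaternion ℝ)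
    (lam : Fin (N + 1) → ℝ) (μ : ℝ) (x : Quaternion ℝ) : Quaternion ℝ :=
  ∑ i, ∑ j,
    (μ * (lam i) ^ 2 * (lam j) ^ 2 /
        (‖x - a i + (μ : Quaternion ℝ)‖ ^ 2 * ‖x - a j + (μ : Quaternion ℝ)‖ ^ 2 *
          ‖x - a j‖ ^ 2)) •
      ((a j - a i) * (x - a j))

open Quaternion

theorem Quaternion.sq_norm (a : ℍ) : ‖a‖ ^ 2 = normSq a := by
  rw [← real_inner_self_eq_norm_sq, inner_self]

theorem Quaternion.normSq_add_coe {R : Type*} [CommRing R] {w : ℍ[R]} (hw : w.re = 0) (r : R) :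
    normSq (w + (r : ℍ[R])) = normSq w + r ^ 2 := by
  rw [normSq_add, normSq_coe, star_coe, mul_coe_eq_smul]
  simp [hw]

theorem Quaternion.add_coe_mul_star_add_coe_mul {R : Type*} [CommRing R] (u : ℍ[R]) {w : ℍ[R]}
    (hw : w.re = 0) (r : R) :
    (u + r) * star (w + r) * w = r ^ 2 • w + normSq w • u + r • ((u - w) * w) := by
  have hstar : star w = -w := by ext <;> simp [hw]
  have hww : w * w = -((normSq w : R) : ℍ[R]) := by
    rw [← star_mul_self, hstar, neg_mul, neg_neg]
  have hcoe : ∀ s : R, (s : ℍ[R]) = s • 1 := fun s => by rw [← coe_mul_eq_smul, mul_one]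
  rw [mul_assoc, star_add, star_coe, hstar, neg_add_eq_sub, sub_mul, sub_mul, hww]
  simp only [hcoe, add_mul, mul_sub, mul_neg, smul_mul_assoc, mul_smul_comm, mul_one, one_mul]
  module

theorem sum_sum_smul_add_smul_eq_sum_smul_sum {ι 𝕜 M : Type*} [Fintype ι] [Field 𝕜]
    [AddCommGroup M] [Module 𝕜 M] (c V D : ι → 𝕜) (t : 𝕜) (w : ι → M)
    (hD : ∀ j, D j = V j + t) (hV : ∀ j, V j ≠ 0) (hD0 : ∀ j, D j ≠ 0) :
    ∑ i, ∑ j, (c i * c j / (D i * D j * V j)) • (t • w j + V j • w i) =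
      (∑ i, c i / D i) • ∑ j, (c j / V j) • w j := by
  calc ∑ i, ∑ j, (c i * c j / (D i * D j * V j)) • (t • w j + V j • w i)
      = ∑ i, ∑ j, ((c i * c j * t / (D i * D j * V j)) • w j +
          (c i * c j / (D i * D j)) • w i) := by
        refine Finset.sum_congr rfl fun i _ => Finset.sum_congr rfl fun j _ => ?_
        rw [smul_add, smul_smul, smul_smul]
        congr 2
        · ring
        · field_simp [hV j]
    _ = ∑ i, ∑ j, ((c i * c j * t / (D i * D j * V j)) • w j +
          (c i * c j / (D i * D j)) • w j) := by
        simp only [Finset.sum_add_distrib]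
        congr 1
        rw [Finset.sum_comm]
        exact Finset.sum_congr rfl fun i _ => Finset.sum_congr rfl fun j _ => by
          rw [mul_comm (c j), mul_comm (D j)]
    _ = ∑ i, ∑ j, (c i / D i * (c j / V j)) • w j := by
        refine Finset.sum_congr rfl fun i _ => Finset.sum_congr rfl fun j _ => ?_
        rw [← add_smul]
        congr 1
        field_simp [hV j, hD0 i, hD0 j]
        rw [hD j]
        ring
    _ = (∑ i, c i / D i) • ∑ j, (c j / V j) • w j := by
        rw [Finset.sum_smul]
        simp only [Finset.smul_sum, smul_smul]

theorem jnrPsi_eq_sum_sum_add_jnrXi (N : ℕ) (a : Fin (N + 1) → ℍ) (lam : Fin (N + 1) → ℝ)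
    (μ : ℝ) (x : ℍ) (hu : ∀ i, (x - a i).re = 0) :
    jnrPsi N a lam μ x =
      ∑ i, ∑ j, (lam i ^ 2 * lam j ^ 2 / (‖x - a i + (μ : ℍ)‖ ^ 2 * ‖x - a j + (μ : ℍ)‖ ^ 2 *
          ‖x - a j‖ ^ 2)) • (μ ^ 2 • (x - a j) + ‖x - a j‖ ^ 2 • (x - a i)) +
        jnrXi N a lam μ x := by
  simp only [jnrPsi, jnrXi, ← Finset.sum_add_distrib]
  refine Finset.sum_congr rfl fun i _ => Finset.sum_congr rfl fun j _ => ?_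
  rw [add_coe_mul_star_add_coe_mul _ (hu j), ← sq_norm, sub_sub_sub_cancel_left]
  module

theorem jnr_Psi_eq_rho_zeta_add_Xi_general (N : ℕ)
    (a : Fin (N + 1) → Quaternion ℝ) (ha_im : ∀ i, (a i).re = 0)
    (lam : Fin (N + 1) → ℝ)
    (μ : ℝ)
    (x : Quaternion ℝ) (hx_im : x.re = 0) (hx : ∀ i, x ≠ a i) :
    jnrPsi N a lam μ x = jnrRho N a lam μ x • jnrZeta N a lam x + jnrXi N a lam μ x := by
  have hu : ∀ i, (x - a i).re = 0 := fun i => by rw [re_sub, hx_im, ha_im, sub_zero]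
  have hV : ∀ i, ‖x - a i‖ ^ 2 ≠ 0 := fun i => by
    have := sub_ne_zero.mpr (hx i)
    positivity
  have hD : ∀ i, ‖x - a i + (μ : Quaternion ℝ)‖ ^ 2 = ‖x - a i‖ ^ 2 + μ ^ 2 := fun i => by
    rw [sq_norm, sq_norm, normSq_add_coe (hu i)]
  have hD0 : ∀ i, ‖x - a i + (μ : Quaternion ℝ)‖ ^ 2 ≠ 0 := fun i => by
    have := sub_ne_zero.mpr (hx i)
    rw [hD]
    positivity
  rw [jnrPsi_eq_sum_sum_add_jnrXi N a lam μ x hu,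
    sum_sum_smul_add_smul_eq_sum_smul_sum _ _ _ _ _ hD hV hD0]
  rfl

/-- For distinct pure imaginary poles `aᵢ`, weights `λᵢ > 0`, `μ > 0`,
and pure imaginary `x` away from the poles: `Ψ(μ)(x) = ρ(μ)(x)·ζ(x) + Ξ(μ)(x)`. -/
theorem jnr_Psi_eq_rho_zeta_add_Xi (N : ℕ)
    (a : Fin (N + 1) → Quaternion ℝ) (ha_im : ∀ i, (a i).re = 0)
    (ha : Function.Injective a)
    (lam : Fin (N + 1) → ℝ) (hlam : ∀ i, 0 < lam i)
    (μ : ℝ) (hμ : 0 < μ)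
    (x : Quaternion ℝ) (hx_im : x.re = 0) (hx : ∀ i, x ≠ a i) :
    jnrPsi N a lam μ x = jnrRho N a lam μ x • jnrZeta N a lam x + jnrXi N a lam μ x :=
  jnr_Psi_eq_rho_zeta_add_Xi_general N a ha_im lam μ x hx_im hx
end

section
/- Identify ℝ³ with the pure imaginary quaternions. Let a₀,…,a_N be distinct pure imaginary quaternions, λ₀,…,λ_N > 0, μ > 0, and let x be pure imaginary with x ≠ aᵢ for all i. With ζ(x) = Σᵢ λᵢ²(x − aᵢ)/‖x − aᵢ‖², Ψ(μ)(x) = Σᵢ,ⱼ λᵢ²λⱼ² (x − aᵢ + μ)·conj(x − aⱼ + μ)·(x − aⱼ)/(‖x − aᵢ + μ‖²‖x − aⱼ + μ‖²‖x − aⱼ‖²), and Ξ(μ)(x) = Σᵢ,ⱼ μλᵢ²λⱼ²(aⱼ − aᵢ)·(x − aⱼ)/(‖x − aᵢ + μ‖²‖x − aⱼ + μ‖²‖x − aⱼ‖²), the imaginary part of Ψ(μ)(x)·conj(ζ(x)), regarded as a vector in ℝ³, equals −Re(Ξ(μ)(x))·ζ(x) − Im(Ξ(μ)(x)) × ζ(x),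 where × is the cross product on ℝ³ and ζ(x), Im(Ξ(μ)(x)) are regarded as vectors in ℝ³. -/
/-- The vector in `ℝ³` formed by the imaginary part of a quaternion. -/
def imVec (q : Quaternion ℝ) : Fin 3 → ℝ := ![q.imI, q.imJ, q.imK]

/-! With `uᵢ = x − aᵢ` pure imaginary, one has
`(uᵢ + μ)·conj(uⱼ + μ)·uⱼ = ‖uⱼ‖² uᵢ + μ² uⱼ + μ (uᵢ − uⱼ) uⱼ`. Summed with the weights of `Ψ`,
the last term gives `Ξ`, and since `‖uⱼ + μ‖² = ‖uⱼ‖² + μ²` the first two add up to `K·ζ` with the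
real factor `K = Σᵢ λᵢ²/‖uᵢ + μ‖²`. So `Ψ·conj ζ = K‖ζ‖² + Ξ·conj ζ`, and as `conj ζ = −ζ` the
imaginary part of `Ξ·conj ζ` is `−Re Ξ · ζ − Im Ξ × ζ`. -/

open Quaternion

theorem Finset.sum_sum_mul_smul_add {ι R M : Type*} [CommSemiring R] [AddCommMonoid M]
    [Module R M] (s : Finset ι) (w : ι → R) (f g : ι → M) :
    ∑ i ∈ s, ∑ j ∈ s, (w i * w j) • (f i + g j) = (∑ i ∈ s, w i) • ∑ i ∈ s, w i • (f i + g i) := by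
  simp only [smul_add, Finset.sum_add_distrib, Finset.smul_sum, Finset.sum_smul, mul_smul]
  congr 1
  · exact Finset.sum_congr rfl fun i _ => Finset.sum_congr rfl fun j _ => smul_comm _ _ _
  · exact Finset.sum_comm

namespace Quaternion

theorem sq_norm_eq_normSq (q : ℍ) : ‖q‖ ^ 2 = normSq q := by
  rw [sq, normSq_eq_norm_mul_self]

theorem sq_norm_add_coe_of_re_eq_zero {q : ℍ} (hq : q.re = 0) (r : ℝ) :
    ‖q + r‖ ^ 2 = ‖q‖ ^ 2 + r ^ 2 := by
  simp only [sq_norm_eq_normSq, normSq_def', re_add, re_coe, imI_add, imI_coe, imJ_add, imJ_coe,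
    imK_add, imK_coe, hq]
  ring

theorem add_coe_mul_star_add_coe_mul_of_re_eq_zero {u v : ℍ} (hu : u.re = 0) (hv : v.re = 0)
    (r : ℝ) :
    (u + r) * star (v + r) * v = ‖v‖ ^ 2 • u + r ^ 2 • v + r • ((u - v) * v) := by
  have hv2 : ‖v‖ ^ 2 = v.imI ^ 2 + v.imJ ^ 2 + v.imK ^ 2 := by
    rw [sq_norm_eq_normSq, normSq_def', hv]; ring
  ext <;> simp [re_mul, imI_mul, imJ_mul, imK_mul, hv2, hu, hv] <;> ring

end Quaternion

theorem imVec_add (p q : ℍ) : imVec (p + q) = imVec p + imVec q := by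
  ext i; fin_cases i <;> rfl

theorem imVec_smul (r : ℝ) (q : ℍ) : imVec (r • q) = r • imVec q := by
  ext i; fin_cases i <;> simp [imVec]

theorem imVec_mul_star (p q : ℍ) :
    imVec (q * star p) = p.re • imVec q - q.re • imVec p - crossProduct (imVec q) (imVec p) := by
  ext i; fin_cases i <;> simp [imVec, cross_apply, imI_mul, imJ_mul, imK_mul] <;> ring

section JNR

variable {N : ℕ} {a : Fin (N + 1) → ℍ} {lam : Fin (N + 1) → ℝ} {μ : ℝ} {x : ℍ}

theorem jnrZeta_re_eq_zero (ha_im : ∀ i, (a i).re = 0) (hx_im : x.re = 0) :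
    (jnrZeta N a lam x).re = 0 := by
  exact Finset.sum_induction _ (fun q : ℍ => q.re = 0) (fun p q hp hq => by simp [hp, hq])
    (by simp) fun i _ => by simp [hx_im, ha_im]

theorem jnrPsi_eq_smul_jnrZeta_add_jnrXi (ha_im : ∀ i, (a i).re = 0) (hx_im : x.re = 0)
    (hx : ∀ i, x ≠ a i) :
    jnrPsi N a lam μ x
      = (∑ i, lam i ^ 2 / ‖x - a i + μ‖ ^ 2) • jnrZeta N a lam x + jnrXi N a lam μ x := by
  set w : Fin (N + 1) → ℝ := fun i => lam i ^ 2 / ‖x - a i + μ‖ ^ 2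
  have hre : ∀ i, (x - a i).re = 0 := fun i => by simp [hx_im, ha_im]
  have hne : ∀ i, ‖x - a i‖ ≠ 0 := fun i => norm_ne_zero_iff.mpr (sub_ne_zero.mpr (hx i))
  have hw : ∀ i, w i = lam i ^ 2 / (‖x - a i‖ ^ 2 + μ ^ 2) := fun i => by
    simp only [w, sq_norm_add_coe_of_re_eq_zero (hre i)]
  have hterm : ∀ i j,
      (lam i ^ 2 * lam j ^ 2 / (‖x - a i + μ‖ ^ 2 * ‖x - a j + μ‖ ^ 2 * ‖x - a j‖ ^ 2)) •
          ((x - a i + μ) * star (x - a j + μ) * (x - a j))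
        = (w i * w j) • ((x - a i) + (μ ^ 2 / ‖x - a j‖ ^ 2) • (x - a j))
          + (μ * lam i ^ 2 * lam j ^ 2 /
              (‖x - a i + μ‖ ^ 2 * ‖x - a j + μ‖ ^ 2 * ‖x - a j‖ ^ 2)) •
            ((a j - a i) * (x - a j)) := by
    intro i j
    rw [add_coe_mul_star_add_coe_mul_of_re_eq_zero (hre i) (hre j),
      ← sub_sub_sub_cancel_left (a i) (a j) x]
    simp only [smul_add, smul_smul, add_assoc, w]
    have hj := hne j
    congr 2 <;> field_simp
  have hzeta : ∀ j, w j • ((x - a j) + (μ ^ 2 / ‖x - a j‖ ^ 2) • (x - a j))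
      = (lam j ^ 2 / ‖x - a j‖ ^ 2) • (x - a j) := fun j => by
    have hj := hne j
    rw [smul_add, smul_smul, ← add_smul, hw]
    congr 1
    field_simp
  calc jnrPsi N a lam μ x
      = ∑ i, ∑ j, ((w i * w j) • ((x - a i) + (μ ^ 2 / ‖x - a j‖ ^ 2) • (x - a j))
          + (μ * lam i ^ 2 * lam j ^ 2 /
              (‖x - a i + μ‖ ^ 2 * ‖x - a j + μ‖ ^ 2 * ‖x - a j‖ ^ 2)) •
            ((a j - a i) * (x - a j))) := by
        simp only [jnrPsi, hterm]
    _ = (∑ i, w i) • ∑ j, w j • ((x - a j) + (μ ^ 2 / ‖x - a j‖ ^ 2) • (x - a j))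
          + jnrXi N a lam μ x := by
        simp only [Finset.sum_add_distrib, Finset.sum_sum_mul_smul_add, jnrXi]
    _ = _ := by simp only [hzeta, jnrZeta, w]

end JNR

theorem jnr_im_Psi_conj_zeta_general (N : ℕ)
    (a : Fin (N + 1) → Quaternion ℝ) (ha_im : ∀ i, (a i).re = 0)
    (lam : Fin (N + 1) → ℝ)
    (μ : ℝ)
    (x : Quaternion ℝ) (hx_im : x.re = 0) (hx : ∀ i, x ≠ a i) :
    imVec (jnrPsi N a lam μ x * star (jnrZeta N a lam x))
      = -((jnrXi N a lam μ x).re • imVec (jnrZeta N a lam x))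
        - crossProduct (imVec (jnrXi N a lam μ x)) (imVec (jnrZeta N a lam x)) := by
  have hζ : (jnrZeta N a lam x).re = 0 := jnrZeta_re_eq_zero ha_im hx_im
  rw [jnrPsi_eq_smul_jnrZeta_add_jnrXi ha_im hx_im hx, imVec_mul_star, imVec_add, imVec_smul]
  simp [hζ, cross_self]

/-- For distinct pure imaginary poles `aᵢ`, weights `λᵢ > 0`, `μ > 0`,
and pure imaginary `x` away from the poles, the imaginary part of `Ψ(μ)(x)·conj(ζ(x))`,
regarded as a vector in `ℝ³`, equals `−Re(Ξ(μ)(x))·ζ(x) − Im(Ξ(μ)(x)) × ζ(x)`. -/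
theorem jnr_im_Psi_conj_zeta (N : ℕ)
    (a : Fin (N + 1) → Quaternion ℝ) (ha_im : ∀ i, (a i).re = 0)
    (ha : Function.Injective a)
    (lam : Fin (N + 1) → ℝ) (hlam : ∀ i, 0 < lam i)
    (μ : ℝ) (hμ : 0 < μ)
    (x : Quaternion ℝ) (hx_im : x.re = 0) (hx : ∀ i, x ≠ a i) :
    imVec (jnrPsi N a lam μ x * star (jnrZeta N a lam x))
      = -((jnrXi N a lam μ x).re • imVec (jnrZeta N a lam x))
        - crossProduct (imVec (jnrXi N a lam μ x)) (imVec (jnrZeta N a lam x)) :=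
  jnr_im_Psi_conj_zeta_general N a ha_im lam μ x hx_im hx
end

section
/- Identify ℝ³ with the pure imaginary quaternions. Let N ≥ 1, let a₀,…,a_N be distinct pure imaginary quaternions, λ₀,…,λ_N > 0, μ > 0, and suppose the pure imaginary x* (distinct from all aᵢ) satisfies ζ(x*) = Σᵢ λᵢ²(x* − aᵢ)/‖x* − aᵢ‖² = 0. Define Ξ(μ)(x) = Σᵢ,ⱼ μλᵢ²λⱼ²(aⱼ − aᵢ)·(x − aⱼ)/(‖x − aᵢ + μ‖²‖x − aⱼ + μ‖²‖x − aⱼ‖²). Then the real part of Ξ(μ)(x*) is strictly positive. -/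
/-! With `vᵢ = x⁎ − aᵢ` pure imaginary, `Re((aⱼ − aᵢ) vⱼ) = ‖vⱼ‖² − ⟪vᵢ, vⱼ⟫` and
`‖vᵢ + μ‖² = ‖vᵢ‖² + μ²`. Writing `cᵢ = λᵢ²/(‖vᵢ‖² + μ²)` and `A = Σ cᵢ vᵢ`, this gives
`Re Ξ = μ (Σ cᵢ)² − μ ⟪A, B⟫` with `B = Σ cⱼ vⱼ/‖vⱼ‖²`. The partial fraction
`1/((r + μ²) r) = (1/r − 1/(r + μ²))/μ²` and `ζ(x⁎) = 0` give `B = −A/μ²`, hence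
`Re Ξ = μ (Σ cᵢ)² + ‖A‖²/μ > 0`. -/

open scoped Quaternion RealInnerProductSpace

namespace Quaternion

theorem re_sum {ι : Type*} (s : Finset ι) (f : ι → ℍ[ℝ]) :
    (∑ i ∈ s, f i).re = ∑ i ∈ s, (f i).re :=
  map_sum (QuaternionAlgebra.reₗ _ _ _) f s

theorem re_mul_eq_neg_inner (p : ℍ[ℝ]) {q : ℍ[ℝ]} (hq : q.re = 0) : (p * q).re = -⟪p, q⟫ := by
  rw [inner_def, star_eq_neg.mpr hq, mul_neg, re_neg, neg_neg]

theorem re_sub_mul_eq_norm_sq_sub_inner (u : ℍ[ℝ]) {v : ℍ[ℝ]} (hv : v.re = 0) :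
    ((u - v) * v).re = ‖v‖ ^ 2 - ⟪u, v⟫ := by
  rw [sub_mul, re_sub, re_mul_eq_neg_inner _ hv, re_mul_eq_neg_inner _ hv,
    real_inner_self_eq_norm_sq]
  ring

theorem norm_add_coe_sq {q : ℍ[ℝ]} (hq : q.re = 0) (μ : ℝ) :
    ‖q + μ‖ ^ 2 = ‖q‖ ^ 2 + μ ^ 2 := by
  simp [norm_add_sq_real, inner_def, hq, norm_coe]

end Quaternion

theorem sum_sum_mul_norm_sq_sub_inner {ι E : Type*} [Fintype ι] [NormedAddCommGroup E]
    [InnerProductSpace ℝ E] (v : ι → E) (c e : ι → ℝ) :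
    ∑ i, ∑ j, c i * e j * (‖v j‖ ^ 2 - ⟪v i, v j⟫) =
      (∑ i, c i) * ∑ j, e j * ‖v j‖ ^ 2 - ⟪∑ i, c i • v i, ∑ j, e j • v j⟫ := by
  rw [Finset.sum_mul_sum, sum_inner]
  simp only [inner_sum, real_inner_smul_left, real_inner_smul_right, ← Finset.sum_sub_distrib]
  refine Finset.sum_congr rfl fun i _ => Finset.sum_congr rfl fun j _ => ?_
  ring

theorem Finset.sum_div_add_mul_smul {ι 𝕜 M : Type*} [Field 𝕜] [AddCommGroup M] [Module 𝕜 M]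
    (s : Finset ι) (w r : ι → 𝕜) (v : ι → M) {t : 𝕜} (ht : t ≠ 0)
    (hr : ∀ i ∈ s, r i ≠ 0) (hrt : ∀ i ∈ s, r i + t ≠ 0) :
    ∑ i ∈ s, (w i / ((r i + t) * r i)) • v i =
      t⁻¹ • (∑ i ∈ s, (w i / r i) • v i - ∑ i ∈ s, (w i / (r i + t)) • v i) := by
  rw [← Finset.sum_sub_distrib, Finset.smul_sum]
  refine Finset.sum_congr rfl fun i hi => ?_
  rw [← sub_smul, smul_smul]
  congr 1
  field_simp [hr i hi, hrt i hi]
  ring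

theorem re_jnrXi_eq (N : ℕ) (a : Fin (N + 1) → ℍ[ℝ]) (lam : Fin (N + 1) → ℝ) (μ : ℝ)
    {x : ℍ[ℝ]} (hx : x.re = 0) (ha : ∀ i, (a i).re = 0) :
    (jnrXi N a lam μ x).re = μ * ∑ i, ∑ j,
      lam i ^ 2 / (‖x - a i‖ ^ 2 + μ ^ 2) *
        (lam j ^ 2 / ((‖x - a j‖ ^ 2 + μ ^ 2) * ‖x - a j‖ ^ 2)) *
        (‖x - a j‖ ^ 2 - ⟪x - a i, x - a j⟫) := by
  have hv : ∀ i, (x - a i).re = 0 := fun i => by simp [hx, ha i]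
  simp only [jnrXi, Quaternion.re_sum, Quaternion.re_smul, smul_eq_mul, Finset.mul_sum]
  refine Finset.sum_congr rfl fun i _ => Finset.sum_congr rfl fun j _ => ?_
  rw [show a j - a i = (x - a i) - (x - a j) by abel,
    Quaternion.re_sub_mul_eq_norm_sq_sub_inner _ (hv j),
    Quaternion.norm_add_coe_sq (hv i), Quaternion.norm_add_coe_sq (hv j)]
  simp only [div_eq_mul_inv, mul_inv]
  ring

theorem jnr_re_Xi_pos_general (N : ℕ)
    (a : Fin (N + 1) → Quaternion ℝ) (ha_im : ∀ i, (a i).re = 0)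
    (lam : Fin (N + 1) → ℝ) (hlam : ∀ i, 0 < lam i)
    (μ : ℝ) (hμ : 0 < μ)
    (xs : Quaternion ℝ) (hxs_im : xs.re = 0) (hxs : ∀ i, xs ≠ a i)
    (hzero : jnrZeta N a lam xs = 0) :
    0 < (jnrXi N a lam μ xs).re := by
  rw [re_jnrXi_eq N a lam μ hxs_im ha_im, sum_sum_mul_norm_sq_sub_inner]
  have hr : ∀ i, 0 < ‖xs - a i‖ ^ 2 := fun i =>
    pow_pos (norm_pos_iff.mpr (sub_ne_zero.mpr (hxs i))) 2
  set c : Fin (N + 1) → ℝ := fun i => lam i ^ 2 / (‖xs - a i‖ ^ 2 + μ ^ 2)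
  set A := ∑ i, c i • (xs - a i)
  have hc : ∀ j, lam j ^ 2 / ((‖xs - a j‖ ^ 2 + μ ^ 2) * ‖xs - a j‖ ^ 2) * ‖xs - a j‖ ^ 2 = c j :=
    fun j => by rw [div_mul_eq_mul_div, mul_div_mul_right _ _ (hr j).ne']
  have hB : ∑ j, (lam j ^ 2 / ((‖xs - a j‖ ^ 2 + μ ^ 2) * ‖xs - a j‖ ^ 2)) • (xs - a j) =
      -(μ ^ 2)⁻¹ • A := by
    rw [Finset.sum_div_add_mul_smul _ _ _ _ (by positivity) (fun i _ => (hr i).ne')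
      (fun i _ => by have := hr i; positivity)]
    unfold jnrZeta at hzero
    rw [hzero, zero_sub, smul_neg, neg_smul]
  have hS : 0 < ∑ i, c i :=
    Finset.sum_pos (fun i _ => by have := hr i; have := hlam i; positivity) Finset.univ_nonempty
  simp only [hc, hB, real_inner_smul_right, real_inner_self_eq_norm_sq, neg_mul,
    sub_neg_eq_add]
  exact mul_pos hμ (add_pos_of_pos_of_nonneg (mul_pos hS hS) (by positivity))

/-- Let `N ≥ 1`, `aᵢ` distinct pure imaginary quaternions, `λᵢ > 0`,
`μ > 0`, and suppose the pure imaginary `x⁎` (distinct from all poles) satisfies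
`ζ(x⁎) = 0`. Then the real part of `Ξ(μ)(x⁎)` is strictly positive. -/
theorem jnr_re_Xi_pos (N : ℕ) (hN : 1 ≤ N)
    (a : Fin (N + 1) → Quaternion ℝ) (ha_im : ∀ i, (a i).re = 0)
    (ha : Function.Injective a)
    (lam : Fin (N + 1) → ℝ) (hlam : ∀ i, 0 < lam i)
    (μ : ℝ) (hμ : 0 < μ)
    (xs : Quaternion ℝ) (hxs_im : xs.re = 0) (hxs : ∀ i, xs ≠ a i)
    (hzero : jnrZeta N a lam xs = 0) :
    0 < (jnrXi N a lam μ xs).re :=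
  jnr_re_Xi_pos_general N a ha_im lam hlam μ hμ xs hxs_im hxs hzero
end

section
/- Let d₀, d₁, d₂ > 0 satisfy the strict triangle inequalities d₀ < d₁ + d₂, d₁ < d₀ + d₂, d₂ < d₀ + d₁. Let M be the 3×3 real matrix with rows (d₀, d₀ − d₂, −d₂), (−d₀, d₁, d₁ − d₀), (d₂ − d₁, −d₁, d₂), and let u = (−d₀ + d₁ + d₂, d₀ − d₁ + d₂, d₀ + d₁ − d₂). Then all entries of u are strictly positive, M u = 0, and the kernel of M is exactly the one-dimensional span of u. -/
open Matrix

/-- Let `d₀, d₁, d₂ > 0` satisfy the strict triangle inequalities. With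
`M` the matrix with rows `(d₀, d₀ − d₂, −d₂)`, `(−d₀, d₁, d₁ − d₀)`, `(d₂ − d₁, −d₁, d₂)`
and `u = (−d₀ + d₁ + d₂, d₀ − d₁ + d₂, d₀ + d₁ − d₂)`, all entries of `u` are strictly
positive, `M u = 0`, and the kernel of `M` is exactly the one-dimensional span of `u`. -/
theorem incircle_weights_kernel (d₀ d₁ d₂ : ℝ)
    (hd₀ : 0 < d₀) (hd₁ : 0 < d₁) (hd₂ : 0 < d₂)
    (h₀ : d₀ < d₁ + d₂) (h₁ : d₁ < d₀ + d₂) (h₂ : d₂ < d₀ + d₁) :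
    let M : Matrix (Fin 3) (Fin 3) ℝ :=
      !![d₀, d₀ - d₂, -d₂; -d₀, d₁, d₁ - d₀; d₂ - d₁, -d₁, d₂]
    let u : Fin 3 → ℝ := ![-d₀ + d₁ + d₂, d₀ - d₁ + d₂, d₀ + d₁ - d₂]
    (∀ i, 0 < u i) ∧ M.mulVec u = 0 ∧ (∀ v : Fin 3 → ℝ, M.mulVec v = 0 ↔ ∃ c : ℝ, v = c • u) := by
  intro M u
  have hu0 : (0:ℝ) < -d₀ + d₁ + d₂ := by linarith
  refine ⟨?_, ?_, ?_⟩
  · intro i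
    fin_cases i <;> simp [u] <;> linarith
  · funext i
    fin_cases i <;>
      simp [M, u, mulVec, dotProduct, Fin.sum_univ_three] <;> ring
  · intro v
    constructor
    · intro hv
      have e0 := congrFun hv 0
      have e1 := congrFun hv 1
      simp [M, mulVec, dotProduct, Fin.sum_univ_three] at e0 e1
      refine ⟨v 0 / (-d₀ + d₁ + d₂), ?_⟩
      have hv1 : (-d₀ + d₁ + d₂) * v 1 = (d₀ - d₁ + d₂) * v 0 := by
        have h := mul_left_cancel₀ (ne_of_gt hd₀)
          (b := (-d₀ + d₁ + d₂) * v 1) (c := (d₀ - d₁ + d₂) * v 0)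
        apply h
        linear_combination (d₁ - d₀) * e0 + d₂ * e1
      have hv2 : (-d₀ + d₁ + d₂) * v 2 = (d₀ + d₁ - d₂) * v 0 := by
        have h := mul_left_cancel₀ (ne_of_gt hd₂)
          (b := (-d₀ + d₁ + d₂) * v 2) (c := (d₀ + d₁ - d₂) * v 0)
        apply h
        linear_combination (d₀ - d₁ - d₂) * e0 + (d₀ - d₂) * hv1
      funext i
      fin_cases i <;>
        simp [u] <;> field_simp <;> linarith [hv1, hv2]
    · rintro ⟨c, rfl⟩
      funext i
      fin_cases i <;>
        simp [M, u, mulVec, dotProduct, Fin.sum_univ_three] <;> ring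
end

section
/- Let a ∈ ℝ³ be nonzero, and consider N = 1 JNR data with poles a₀ = a, a₁ = −a and equal weights λ₀ = λ₁ = 1. Then for x ∈ ℝ³ ∖ {a, −a}, ζ(x) = (x − a)/‖x − a‖² + (x + a)/‖x + a‖² = 0 if and only if x = 0. -/
/-!
The map `ι v = v / ‖v‖²` is the inversion in the unit sphere, an odd involution of the whole
space (Mathlib sends the centre to itself, `ι 0 = 0`). Hence
`ζ(x) = ι(x - a) + ι(x + a)` vanishes iff `ι(x - a) = ι(-(x + a))`, i.e. iff `x - a = -(x + a)`,
i.e. iff `x = 0`.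
-/

open EuclideanGeometry

section UnitInversion

variable {V : Type*} [NormedAddCommGroup V] [InnerProductSpace ℝ V]

theorem inversion_zero_one_eq_smul (v : V) : inversion (0 : V) 1 v = (1 / ‖v‖ ^ 2) • v := by
  simp [inversion]

theorem inversion_zero_one_neg (v : V) : inversion (0 : V) 1 (-v) = -inversion (0 : V) 1 v := by
  simp only [inversion_zero_one_eq_smul, norm_neg, smul_neg]

theorem inv_smul_add_inv_smul_eq_zero_iff (u v : V) :
    (1 / ‖u‖ ^ 2) • u + (1 / ‖v‖ ^ 2) • v = 0 ↔ u + v = 0 := by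
  simp only [← inversion_zero_one_eq_smul, add_eq_zero_iff_eq_neg, ← inversion_zero_one_neg]
  exact (inversion_injective (0 : V) one_ne_zero).eq_iff

end UnitInversion

theorem jnr_one_skyrmion_location_general (a : EuclideanSpace ℝ (Fin 3))
    (x : EuclideanSpace ℝ (Fin 3)) :
    ((1 / ‖x - a‖ ^ 2) • (x - a) + (1 / ‖x + a‖ ^ 2) • (x + a) = 0) ↔ x = 0 := by
  rw [inv_smul_add_inv_smul_eq_zero_iff, sub_add_add_cancel, ← two_smul ℝ x, smul_eq_zero]
  simp only [two_ne_zero, false_or]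

/-- For `N = 1` JNR data with poles `a₀ = a`, `a₁ = −a` (`a ≠ 0`) and
equal unit weights, `ζ(x) = (x − a)/‖x − a‖² + (x + a)/‖x + a‖² = 0` iff `x = 0`. -/
theorem jnr_one_skyrmion_location (a : EuclideanSpace ℝ (Fin 3)) (ha : a ≠ 0)
    (x : EuclideanSpace ℝ (Fin 3)) (hx₀ : x ≠ a) (hx₁ : x ≠ -a) :
    ((1 / ‖x - a‖ ^ 2) • (x - a) + (1 / ‖x + a‖ ^ 2) • (x + a) = 0) ↔ x = 0 :=
  jnr_one_skyrmion_location_general a x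
end

section
/- Consider the tetrahedral N = 3 JNR data with equal unit weights and poles a₀ = (1,1,1), a₁ = (1,−1,−1), a₂ = (−1,1,−1), a₃ = (−1,−1,1) in ℝ³. Then the set of x ∈ ℝ³ ∖ {a₀, a₁, a₂, a₃} satisfying ζ(x) = Σᵢ₌₀³ (x − aᵢ)/‖x − aᵢ‖² = 0 is exactly {(0,0,0), (1/3,1/3,1/3), (1/3,−1/3,−1/3), (−1/3,1/3,−1/3), (−1/3,−1/3,1/3)}. -/
/-!
Write `x = (p, q, r)`. Clearing the four denominators turns the coordinates of `ζ(x) = 0` into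
`F(p, q, r) = F(q, p, r) = F(r, p, q) = 0` for one polynomial `F`, symmetric in its last two
arguments. Since `q F(p, q, r) - p F(q, p, r) = 8 (p² - q²) (2pq + r (‖x‖² + 3))`, each pair of
coordinates has equal squares or a vanishing "mixed" factor; two mixed factors vanish together
only on a coordinate axis, where `F` has no root but `0`. Hence away from the origin
`p² = q² = r²`, and on each of the four diagonals `F` is, up to sign,
`t (3t - 1) (t - 1) (3t² + 2t + 3)²`. Its roots `t = 0, 1/3, 1` give the centre, the four
locations and the four poles.
-/

/-- The point `(p, q, r)` of `ℝ³` as an element of `EuclideanSpace ℝ (Fin 3)`. -/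
noncomputable def pt (p q r : ℝ) : EuclideanSpace ℝ (Fin 3) :=
  (WithLp.equiv 2 (Fin 3 → ℝ)).symm ![p, q, r]

/-- The tetrahedral `N = 3` JNR poles: alternating vertices of the cube `[-1,1]³`. -/
noncomputable def tetraPoles : Fin 4 → EuclideanSpace ℝ (Fin 3) :=
  ![pt 1 1 1, pt 1 (-1) (-1), pt (-1) 1 (-1), pt (-1) (-1) 1]

@[simp] lemma pt_apply_zero (p q r : ℝ) : pt p q r 0 = p := rfl

@[simp] lemma pt_apply_one (p q r : ℝ) : pt p q r 1 = q := rfl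

@[simp] lemma pt_apply_two (p q r : ℝ) : pt p q r 2 = r := rfl

lemma eq_pt_iff {x : EuclideanSpace ℝ (Fin 3)} {p q r : ℝ} :
    x = pt p q r ↔ x 0 = p ∧ x 1 = q ∧ x 2 = r := by
  constructor
  · rintro rfl
    exact ⟨rfl, rfl, rfl⟩
  · rintro ⟨rfl, rfl, rfl⟩
    ext i
    fin_cases i <;> rfl

lemma pt_coords (x : EuclideanSpace ℝ (Fin 3)) : pt (x 0) (x 1) (x 2) = x :=
  (eq_pt_iff.2 ⟨rfl, rfl, rfl⟩).symm

lemma norm_sub_pt_sq (x : EuclideanSpace ℝ (Fin 3)) (p q r : ℝ) :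
    ‖x - pt p q r‖ ^ 2 = (x 0 - p) ^ 2 + (x 1 - q) ^ 2 + (x 2 - r) ^ 2 := by
  rw [EuclideanSpace.norm_sq_eq, Fin.sum_univ_three]
  simp

abbrev tetraLocations : Set (EuclideanSpace ℝ (Fin 3)) :=
  {pt 0 0 0, pt (1/3) (1/3) (1/3), pt (1/3) (-(1/3)) (-(1/3)),
    pt (-(1/3)) (1/3) (-(1/3)), pt (-(1/3)) (-(1/3)) (1/3)}

lemma tetraLocations_disjoint_range_tetraPoles :
    Disjoint tetraLocations (Set.range tetraPoles) := by
  rw [Set.disjoint_right]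
  rintro _ ⟨i, rfl⟩
  fin_cases i <;> norm_num [tetraPoles, eq_pt_iff]

/-- `¼ ∏ᵢ ‖x - aᵢ‖²` times the first coordinate of `ζ` at `x = (p, q, r)`. -/
def tetraNumerator (p q r : ℝ) : ℝ :=
  p * ((p^2 + q^2 + r^2)^3 + 3 * (p^2 + q^2 + r^2)^2 - 5 * (p^2 + q^2 + r^2) + 9 + 16 * p^2)
    - 8 * q * r * (2 * p^2 + (p^2 + q^2 + r^2) + 3)

def tetraMixed (p q r : ℝ) : ℝ := 2 * p * q + r * (p^2 + q^2 + r^2 + 3)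

lemma tetraNumerator_eq_zero_iff {p q r d₀ d₁ d₂ d₃ : ℝ}
    (h₀ : d₀ = (p - 1)^2 + (q - 1)^2 + (r - 1)^2) (h₁ : d₁ = (p - 1)^2 + (q + 1)^2 + (r + 1)^2)
    (h₂ : d₂ = (p + 1)^2 + (q - 1)^2 + (r + 1)^2) (h₃ : d₃ = (p + 1)^2 + (q + 1)^2 + (r - 1)^2)
    (hd₀ : d₀ ≠ 0) (hd₁ : d₁ ≠ 0) (hd₂ : d₂ ≠ 0) (hd₃ : d₃ ≠ 0) :
    tetraNumerator p q r = 0 ↔ (p - 1) / d₀ + (p - 1) / d₁ + (p + 1) / d₂ + (p + 1) / d₃ = 0 := by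
  have key : tetraNumerator p q r =
      d₀ * d₁ * d₂ * d₃ / 4 * ((p - 1) / d₀ + (p - 1) / d₁ + (p + 1) / d₂ + (p + 1) / d₃) := by
    field_simp
    subst h₀ h₁ h₂ h₃
    unfold tetraNumerator
    ring
  rw [key, mul_eq_zero, or_iff_right (by positivity)]

lemma tetraNumerator_comm (p q r : ℝ) : tetraNumerator p q r = tetraNumerator p r q := by
  unfold tetraNumerator; ring

lemma tetraNumerator_neg_left (p q r : ℝ) :
    tetraNumerator (-p) q r = -tetraNumerator p (-q) r := by
  unfold tetraNumerator; ring

lemma tetraNumerator_neg_neg (p q r : ℝ) : tetraNumerator p (-q) (-r) = tetraNumerator p q r := by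
  unfold tetraNumerator; ring

lemma mul_tetraNumerator_sub_mul_tetraNumerator (p q r : ℝ) :
    q * tetraNumerator p q r - p * tetraNumerator q p r = 8 * (p^2 - q^2) * tetraMixed p q r := by
  unfold tetraNumerator tetraMixed; ring

lemma tetraNumerator_diag (t : ℝ) :
    tetraNumerator t t t = t * (3 * t - 1) * (t - 1) * (3 * t^2 + 2 * t + 3)^2 := by
  unfold tetraNumerator; ring

lemma eq_of_tetraNumerator_diag_eq_zero {t : ℝ} (h : tetraNumerator t t t = 0) :
    t = 0 ∨ t = 1/3 ∨ t = 1 := by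
  have hq : 3 * t^2 + 2 * t + 3 ≠ 0 := by nlinarith [sq_nonneg (3 * t + 1)]
  rw [tetraNumerator_diag] at h
  simp only [mul_eq_zero, sub_eq_zero, pow_eq_zero_iff two_ne_zero, hq, or_false] at h
  rcases h with (h | h) | h
  · exact .inl h
  · exact .inr (.inl (by linarith))
  · exact .inr (.inr h)

lemma eq_zero_of_tetraNumerator_axis_eq_zero {t : ℝ} (h : tetraNumerator t 0 0 = 0) : t = 0 := by
  have : tetraNumerator t 0 0 = t * (t^6 + 3 * t^4 + 11 * t^2 + 9) := by
    unfold tetraNumerator; ring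
  rw [this] at h
  exact (mul_eq_zero.1 h).resolve_right (by positivity)

lemma eq_zero_of_tetraMixed_eq_zero {p q r : ℝ} (h₁ : tetraMixed p q r = 0)
    (h₂ : tetraMixed q r p = 0) : p = 0 ∧ r = 0 := by
  unfold tetraMixed at h₁ h₂
  have hsum : (p + r) * (p^2 + q^2 + r^2 + 3 + 2 * q) = 0 := by linear_combination h₁ + h₂
  have hdiff : (p - r) * (p^2 + q^2 + r^2 + 3 - 2 * q) = 0 := by linear_combination h₂ - h₁
  have hplus := (mul_eq_zero.1 hsum).resolve_right
    (by nlinarith [sq_nonneg (q + 1), sq_nonneg p, sq_nonneg r])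
  have hminus := (mul_eq_zero.1 hdiff).resolve_right
    (by nlinarith [sq_nonneg (q - 1), sq_nonneg p, sq_nonneg r])
  constructor <;> linarith

lemma eq_zero_of_tetraMixed_eq_zero_of_tetraNumerator_eq_zero {p q r : ℝ}
    (h₁ : tetraMixed p q r = 0) (h₂ : tetraMixed q r p = 0) (h : tetraNumerator q p r = 0) :
    p = 0 ∧ q = 0 ∧ r = 0 := by
  obtain ⟨rfl, rfl⟩ := eq_zero_of_tetraMixed_eq_zero h₁ h₂
  exact ⟨rfl, eq_zero_of_tetraNumerator_axis_eq_zero h, rfl⟩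

lemma sq_eq_sq_of_tetraNumerator_eq_zero {p q r : ℝ} (hp : tetraNumerator p q r = 0)
    (hq : tetraNumerator q p r = 0) (hr : tetraNumerator r p q = 0) :
    (q^2 = p^2 ∧ r^2 = p^2) ∨ (p = 0 ∧ q = 0 ∧ r = 0) := by
  have hpq := mul_tetraNumerator_sub_mul_tetraNumerator p q r
  have hqr := mul_tetraNumerator_sub_mul_tetraNumerator q r p
  have hrp := mul_tetraNumerator_sub_mul_tetraNumerator r p q
  rw [tetraNumerator_comm q r p, tetraNumerator_comm r q p] at hqr
  rw [tetraNumerator_comm p r q] at hrp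
  simp only [hp, hq, hr, mul_zero, sub_zero, zero_eq_mul, mul_eq_zero, sub_eq_zero,
    OfNat.ofNat_ne_zero, false_or] at hpq hqr hrp
  rcases hpq with hpq | hpq <;> rcases hqr with hqr | hqr <;> rcases hrp with hrp | hrp
  all_goals try exact .inl ⟨by linarith, by linarith⟩
  · obtain ⟨hq, hr, hp⟩ := eq_zero_of_tetraMixed_eq_zero_of_tetraNumerator_eq_zero hqr hrp
      (by rwa [tetraNumerator_comm])
    exact .inr ⟨hp, hq, hr⟩
  · obtain ⟨hr, hp, hq⟩ := eq_zero_of_tetraMixed_eq_zero_of_tetraNumerator_eq_zero hrp hpq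
      (by rwa [tetraNumerator_comm])
    exact .inr ⟨hp, hq, hr⟩
  all_goals exact .inr (eq_zero_of_tetraMixed_eq_zero_of_tetraNumerator_eq_zero hpq hqr hq)

lemma pt_mem_of_sq_eq_sq {p q r : ℝ} (hq : q^2 = p^2) (hr : r^2 = p^2)
    (h : tetraNumerator p q r = 0) :
    pt p q r ∈ tetraLocations ∨ pt p q r ∈ Set.range tetraPoles := by
  have hneg {t : ℝ} (ht : tetraNumerator t t (-t) = 0) : t = -0 ∨ t = -(1/3) ∨ t = -1 := by
    simp only [← neg_eq_iff_eq_neg]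
    refine eq_of_tetraNumerator_diag_eq_zero ?_
    rw [tetraNumerator_neg_left, neg_neg, ht, neg_zero]
  rcases eq_or_eq_neg_of_sq_eq_sq _ _ hq with rfl | rfl <;>
    rcases eq_or_eq_neg_of_sq_eq_sq _ _ hr with rfl | rfl
  · rcases eq_of_tetraNumerator_diag_eq_zero h with rfl | rfl | rfl <;>
      norm_num [tetraPoles, eq_pt_iff]
  · rcases hneg h with rfl | rfl | rfl <;> norm_num [tetraPoles, eq_pt_iff]
  · rw [tetraNumerator_comm] at h
    rcases hneg h with rfl | rfl | rfl <;> norm_num [tetraPoles, eq_pt_iff]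
  · rw [tetraNumerator_neg_neg] at h
    rcases eq_of_tetraNumerator_diag_eq_zero h with rfl | rfl | rfl <;>
      norm_num [tetraPoles, eq_pt_iff]

lemma pt_mem_of_tetraNumerator_eq_zero {p q r : ℝ} (hp : tetraNumerator p q r = 0)
    (hq : tetraNumerator q p r = 0) (hr : tetraNumerator r p q = 0) :
    pt p q r ∈ tetraLocations ∨ pt p q r ∈ Set.range tetraPoles := by
  rcases sq_eq_sq_of_tetraNumerator_eq_zero hp hq hr with ⟨hpq, hpr⟩ | ⟨rfl, rfl, rfl⟩
  · exact pt_mem_of_sq_eq_sq hpq hpr hp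
  · exact .inl (by simp)

lemma sum_smul_sub_tetraPoles_eq_zero_iff {x : EuclideanSpace ℝ (Fin 3)}
    (hx : ∀ i, x ≠ tetraPoles i) :
    ∑ i, ((1 : ℝ) / ‖x - tetraPoles i‖ ^ 2) • (x - tetraPoles i) = 0 ↔
      tetraNumerator (x 0) (x 1) (x 2) = 0 ∧ tetraNumerator (x 1) (x 0) (x 2) = 0 ∧
        tetraNumerator (x 2) (x 0) (x 1) = 0 := by
  have hd i : ‖x - tetraPoles i‖ ^ 2 ≠ 0 := by simpa [sub_eq_zero] using hx i
  have hD₀ : ‖x - tetraPoles 0‖ ^ 2 = (x 0 - 1)^2 + (x 1 - 1)^2 + (x 2 - 1)^2 :=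
    norm_sub_pt_sq x 1 1 1
  have hD₁ : ‖x - tetraPoles 1‖ ^ 2 = (x 0 - 1)^2 + (x 1 + 1)^2 + (x 2 + 1)^2 :=
    (norm_sub_pt_sq x 1 (-1) (-1)).trans (by ring)
  have hD₂ : ‖x - tetraPoles 2‖ ^ 2 = (x 0 + 1)^2 + (x 1 - 1)^2 + (x 2 + 1)^2 :=
    (norm_sub_pt_sq x (-1) 1 (-1)).trans (by ring)
  have hD₃ : ‖x - tetraPoles 3‖ ^ 2 = (x 0 + 1)^2 + (x 1 + 1)^2 + (x 2 - 1)^2 :=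
    (norm_sub_pt_sq x (-1) (-1) 1).trans (by ring)
  -- For the coordinates `1` and `2` the poles are relabelled by `1 ↔ 2`, resp. `1 → 3 → 2`.
  rw [tetraNumerator_eq_zero_iff hD₀ hD₁ hD₂ hD₃ (hd 0) (hd 1) (hd 2) (hd 3),
    tetraNumerator_eq_zero_iff (hD₀.trans (by ring)) (hD₂.trans (by ring)) (hD₁.trans (by ring))
      (hD₃.trans (by ring)) (hd 0) (hd 2) (hd 1) (hd 3),
    tetraNumerator_eq_zero_iff (hD₀.trans (by ring)) (hD₃.trans (by ring)) (hD₁.trans (by ring))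
      (hD₂.trans (by ring)) (hd 0) (hd 3) (hd 1) (hd 2)]
  simp [← WithLp.ofLp_eq_zero, funext_iff, Fin.forall_fin_succ, Fin.sum_univ_four, tetraPoles,
    div_eq_inv_mul, add_right_comm _ (_ * (x 1 - 1)), add_right_comm _ (_ * (x 2 - 1))]

/-- For the tetrahedral `N = 3` JNR data with equal unit weights, the
set of zeros of `ζ(x) = Σᵢ (x − aᵢ)/‖x − aᵢ‖²` away from the poles is exactly
`{(0,0,0)} ∪ {(±1/3, ±1/3, ±1/3) with an even number of minus signs}`. -/
theorem jnr_tetrahedral_locations :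
    {x : EuclideanSpace ℝ (Fin 3) |
        (∀ i, x ≠ tetraPoles i) ∧
          ∑ i, ((1 : ℝ) / ‖x - tetraPoles i‖ ^ 2) • (x - tetraPoles i) = 0}
      = {pt 0 0 0, pt (1/3) (1/3) (1/3), pt (1/3) (-(1/3)) (-(1/3)),
          pt (-(1/3)) (1/3) (-(1/3)), pt (-(1/3)) (-(1/3)) (1/3)} := by
  ext x
  constructor
  · rintro ⟨hx, hζ⟩
    obtain ⟨h₀, h₁, h₂⟩ := (sum_smul_sub_tetraPoles_eq_zero_iff hx).1 hζ
    rw [← pt_coords x] at hx ⊢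
    exact (pt_mem_of_tetraNumerator_eq_zero h₀ h₁ h₂).resolve_right (by simpa [eq_comm] using hx)
  · intro hmem
    have hx : ∀ i, x ≠ tetraPoles i := fun i hi =>
      tetraLocations_disjoint_range_tetraPoles.ne_of_mem hmem ⟨i, rfl⟩ hi
    refine ⟨hx, (sum_smul_sub_tetraPoles_eq_zero_iff hx).2 ?_⟩
    rcases hmem with rfl | rfl | rfl | rfl | rfl <;> norm_num [tetraNumerator]
end

section
/- Consider the tetrahedral N = 3 JNR data with equal unit weights and poles a₀ = (1,1,1), a₁ = (1,−1,−1), a₂ = (−1,1,−1), a₃ = (−1,−1,1) in ℝ³, and let f(x) = Σᵢ₌₀³ log‖x − aᵢ‖. Then the Hessian of f at the origin equals (4/9)·Id₃; in particular it is positive definite and the origin is a non-degenerate local minimum of f. -/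
open scoped RealInnerProductSpace

/-- The potential `f(x) = Σᵢ log‖x − aᵢ‖` for the tetrahedral poles (equal unit
weights). -/
noncomputable def tetraF (x : EuclideanSpace ℝ (Fin 3)) : ℝ :=
  ∑ i, Real.log ‖x - tetraPoles i‖

/-!
The gradient of `f(x) = Σᵢ log‖x - aᵢ‖` is `ζ(x) = Σᵢ ‖x - aᵢ‖⁻² (x - aᵢ)`, and the derivative of
`y ↦ ‖y - a‖⁻² (y - a)` at `x` is `‖x - a‖⁻² (Id - 2 u uᵀ)` with `u` the unit vector along `x - a`.
At the origin every tetrahedral pole has `‖aᵢ‖² = 3`, and the poles form a tight frame,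
`Σᵢ ⟪aᵢ, v⟫ aᵢ = 4 v`, so the Hessian is `(4/3) Id - (2/9) · 4 Id = (4/9) Id`.

The local minimum comes from an explicit estimate: `2 f(x) = log Πᵢ ‖x - aᵢ‖²`, and with
`s = ‖x‖²`, `tᵢ = ⟪x, aᵢ⟫` we have `‖x - aᵢ‖² = 3 + s - 2 tᵢ`, `Σ tᵢ = 0` and `Σ tᵢ² = 4 s`
(the frame identity again), so the product is `81 + 36 s + O(s^{3/2}) ≥ 81 = Πᵢ ‖aᵢ‖²`.
-/

open Finset

section LogPotential

variable {ι F : Type*} [Fintype ι] [NormedAddCommGroup F]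

theorem sum_log_norm_eq_log_prod_norm_sq_div_two (v : ι → F) (hv : ∀ i, v i ≠ 0) :
    ∑ i, Real.log ‖v i‖ = Real.log (∏ i, ‖v i‖ ^ 2) / 2 := by
  rw [Real.log_prod fun i _ => by simpa using hv i, sum_div]
  simp [Real.log_pow]

variable [InnerProductSpace ℝ F]

noncomputable def logPotential (a : ι → F) (x : F) : ℝ :=
  ∑ i, Real.log ‖x - a i‖

noncomputable def logPotentialGrad (a : ι → F) (x : F) : F :=
  ∑ i, (‖x - a i‖ ^ 2)⁻¹ • (x - a i)

omit [Fintype ι] in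
theorem hasFDerivAt_log_norm_sub {a x : F} (hx : x ≠ a) :
    HasFDerivAt (fun y => Real.log ‖y - a‖) ((‖x - a‖ ^ 2)⁻¹ • innerSL ℝ (x - a)) x := by
  have hsq := (((hasFDerivAt_id x).sub_const a).norm_sq.log
    (by simpa [sub_eq_zero] using hx)).const_mul (2⁻¹ : ℝ)
  have hlog : (fun y => Real.log ‖y - a‖) = fun y => 2⁻¹ * Real.log (‖id y - a‖ ^ 2) := by
    funext y
    simp [Real.log_pow]
  rw [hlog]
  refine hsq.congr_fderiv ?_
  ext v
  simp
  ring

omit [Fintype ι] in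
theorem hasFDerivAt_inv_norm_sq_smul_sub {a x : F} (hx : x ≠ a) :
    HasFDerivAt (fun y => (‖y - a‖ ^ 2)⁻¹ • (y - a))
      ((‖x - a‖ ^ 2)⁻¹ • (ContinuousLinearMap.id ℝ F
        - (2 / ‖x - a‖ ^ 2) • (innerSL ℝ (x - a)).smulRight (x - a))) x := by
  have hsub := (hasFDerivAt_id (𝕜 := ℝ) x).sub_const a
  have hne : ‖id x - a‖ ^ 2 ≠ 0 := by simpa [sub_eq_zero] using hx
  refine (((hasDerivAt_inv hne).comp_hasFDerivAt x hsub.norm_sq).smul hsub).congr_fderiv ?_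
  ext v
  simp
  module

theorem hasFDerivAt_logPotentialGrad (a : ι → F) {x : F} (hx : ∀ i, x ≠ a i) :
    HasFDerivAt (logPotentialGrad a)
      (∑ i, (‖x - a i‖ ^ 2)⁻¹ • (ContinuousLinearMap.id ℝ F
        - (2 / ‖x - a i‖ ^ 2) • (innerSL ℝ (x - a i)).smulRight (x - a i))) x :=
  HasFDerivAt.fun_sum fun i _ => hasFDerivAt_inv_norm_sq_smul_sub (hx i)

theorem hasGradientAt_logPotential [CompleteSpace F] (a : ι → F) {x : F} (hx : ∀ i, x ≠ a i) :
    HasGradientAt (logPotential a) (logPotentialGrad a x) x := by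
  rw [hasGradientAt_iff_hasFDerivAt]
  refine (HasFDerivAt.fun_sum fun i _ => hasFDerivAt_log_norm_sub (hx i)).congr_fderiv ?_
  ext v
  simp [logPotentialGrad]

end LogPotential

theorem eighty_one_le_prod_three_add_sub_two_mul (s : ℝ) (t : Fin 4 → ℝ) (hs : s ≤ 1 / 400)
    (hsum : ∑ i, t i = 0) (hsq : ∑ i, t i ^ 2 = 4 * s) :
    81 ≤ ∏ i, (3 + s - 2 * t i) := by
  have hs0 : 0 ≤ s := by nlinarith [sum_nonneg fun i (_ : i ∈ univ) => sq_nonneg (t i)]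
  have ht : ∀ i, |t i| ≤ 1 / 10 := fun i => by
    have : t i ^ 2 ≤ 4 * s := hsq ▸ single_le_sum (fun j _ => sq_nonneg (t j)) (mem_univ i)
    exact abs_le_of_sq_le_sq (by nlinarith) (by norm_num)
  have hcube : ∀ i, |t i ^ 3| ≤ t i ^ 2 / 10 := fun i => by
    rw [pow_succ, abs_mul, abs_of_nonneg (sq_nonneg _)]
    nlinarith [ht i, sq_nonneg (t i)]
  simp only [Fin.sum_univ_four, Fin.prod_univ_four] at *
  -- Newton's identities with `e₁ = 0`: `e₂ = -2 s` and `e₃ = (Σ tᵢ³) / 3`.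
  have hexpand : (3 + s - 2 * t 0) * (3 + s - 2 * t 1) * (3 + s - 2 * t 2) * (3 + s - 2 * t 3)
      = (3 + s) ^ 4 - 8 * (3 + s) ^ 2 * s
        - 8 / 3 * (3 + s) * (t 0 ^ 3 + t 1 ^ 3 + t 2 ^ 3 + t 3 ^ 3)
        + 16 * (t 0 * t 1) * (t 2 * t 3) := by
    have h3 : t 3 = -(t 0 + t 1 + t 2) := by linarith
    have hs' : s = (t 0 ^ 2 + t 1 ^ 2 + t 2 ^ 2 + t 3 ^ 2) / 4 := by linarith
    rw [hs', h3]
    ring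
  have hp3 : |t 0 ^ 3 + t 1 ^ 3 + t 2 ^ 3 + t 3 ^ 3| ≤ 2 / 5 * s := by
    refine (abs_add_le _ _).trans ?_
    linarith [abs_add_three (t 0 ^ 3) (t 1 ^ 3) (t 2 ^ 3), hcube 0, hcube 1, hcube 2, hcube 3]
  have he4 : |t 0 * t 1 * (t 2 * t 3)| ≤ s / 50 := by
    rw [abs_mul, abs_mul, abs_mul]
    have h01 : |t 0| * |t 1| ≤ 1 / 100 := by
      nlinarith [ht 0, ht 1, abs_nonneg (t 0), abs_nonneg (t 1)]
    have h23 : |t 2| * |t 3| ≤ 2 * s := by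
      nlinarith [sq_abs (t 2), sq_abs (t 3), sq_nonneg (|t 2| - |t 3|), sq_nonneg (t 0),
        sq_nonneg (t 1)]
    nlinarith [abs_nonneg (t 0), abs_nonneg (t 1), mul_nonneg (abs_nonneg (t 2)) (abs_nonneg (t 3))]
  rw [hexpand]
  have hu : 0 ≤ 3 + s := by linarith
  nlinarith [(abs_le.1 he4).1, mul_le_mul_of_nonneg_left (abs_le.1 hp3).2 hu,
    pow_nonneg hs0 2, pow_nonneg hs0 3, pow_nonneg hs0 4]

section Tetrahedron

local notation "E" => EuclideanSpace ℝ (Fin 3)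

theorem norm_tetraPoles_sq (i : Fin 4) : ‖tetraPoles i‖ ^ 2 = 3 := by
  fin_cases i <;> simp [tetraPoles, pt, EuclideanSpace.norm_sq_eq, Fin.sum_univ_three] <;> norm_num

theorem tetraPoles_ne_zero (i : Fin 4) : tetraPoles i ≠ 0 := by
  intro h
  simpa [h] using norm_tetraPoles_sq i

theorem sum_tetraPoles : ∑ i, tetraPoles i = 0 := by
  ext j
  fin_cases j <;> simp [tetraPoles, pt, Fin.sum_univ_four]

theorem sum_inner_smul_tetraPoles (v : E) :
    ∑ i, ⟪tetraPoles i, v⟫ • tetraPoles i = (4 : ℝ) • v := by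
  ext j
  fin_cases j <;> simp [tetraPoles, pt, PiLp.inner_apply, Fin.sum_univ_three, Fin.sum_univ_four]
    <;> ring

theorem hasFDerivAt_logPotentialGrad_tetraPoles_zero :
    HasFDerivAt (logPotentialGrad tetraPoles) ((4 / 9 : ℝ) • ContinuousLinearMap.id ℝ E) 0 := by
  refine (hasFDerivAt_logPotentialGrad tetraPoles
    fun i => (tetraPoles_ne_zero i).symm).congr_fderiv ?_
  ext1 v
  simp [norm_tetraPoles_sq, smul_sub, sum_sub_distrib, ← smul_sum, sum_inner_smul_tetraPoles]
  module

theorem tetraF_eq_logPotential : tetraF = logPotential tetraPoles := rfl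

theorem isLocalMin_logPotential_tetraPoles_zero : IsLocalMin (logPotential tetraPoles) 0 := by
  filter_upwards [Metric.closedBall_mem_nhds (0 : E) (by norm_num : (0 : ℝ) < 1 / 20)] with x hx
  have hx2 : ‖x‖ ^ 2 ≤ 1 / 400 := by
    rw [mem_closedBall_zero_iff] at hx
    nlinarith [norm_nonneg x]
  have hsum : ∑ i, ⟪x, tetraPoles i⟫ = 0 := by
    rw [← inner_sum, sum_tetraPoles, inner_zero_right]
  have hsq : ∑ i, ⟪x, tetraPoles i⟫ ^ 2 = 4 * ‖x‖ ^ 2 :=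
    calc ∑ i, ⟪x, tetraPoles i⟫ ^ 2 = ⟪x, ∑ i, ⟪tetraPoles i, x⟫ • tetraPoles i⟫ := by
          simp [inner_sum, inner_smul_right, real_inner_comm, sq]
      _ = 4 * ‖x‖ ^ 2 := by
          rw [sum_inner_smul_tetraPoles, inner_smul_right, real_inner_self_eq_norm_sq]
  have hprod : 81 ≤ ∏ i, ‖x - tetraPoles i‖ ^ 2 := by
    convert eighty_one_le_prod_three_add_sub_two_mul _ _ hx2 hsum hsq using 2 with i
    rw [norm_sub_sq_real, norm_tetraPoles_sq]
    ring
  have hne : ∀ i, x - tetraPoles i ≠ 0 := by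
    simpa using prod_ne_zero_iff.1 (lt_of_lt_of_le (by norm_num) hprod).ne'
  have hprod_zero : ∏ i, ‖0 - tetraPoles i‖ ^ 2 = 81 := by
    simp [norm_tetraPoles_sq]
    norm_num
  show logPotential tetraPoles 0 ≤ logPotential tetraPoles x
  rw [logPotential, logPotential, sum_log_norm_eq_log_prod_norm_sq_div_two _ hne,
    sum_log_norm_eq_log_prod_norm_sq_div_two _ fun i => by simpa using tetraPoles_ne_zero i,
    hprod_zero]
  gcongr

end Tetrahedron

/-- For the tetrahedral `N = 3` JNR data with equal unit weights, the
Hessian of `f(x) = Σᵢ log‖x − aᵢ‖` at the origin (i.e. the derivative of `∇f` at `0`)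
equals `(4/9)·Id`; in particular it is positive definite and the origin is a
non-degenerate local minimum of `f`. -/
theorem jnr_tetrahedral_hessian_at_origin :
    fderiv ℝ (fun y => gradient tetraF y) 0
        = (4 / 9 : ℝ) • ContinuousLinearMap.id ℝ (EuclideanSpace ℝ (Fin 3))
      ∧ (∀ v : EuclideanSpace ℝ (Fin 3), v ≠ 0 →
          0 < ⟪v, fderiv ℝ (fun y => gradient tetraF y) 0 v⟫)
      ∧ IsLocalMin tetraF 0 := by
  rw [tetraF_eq_logPotential]
  have hgrad : gradient (logPotential tetraPoles) =ᶠ[nhds 0] logPotentialGrad tetraPoles := by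
    filter_upwards [Filter.eventually_all.2 fun i => eventually_ne_nhds (tetraPoles_ne_zero i).symm]
      with y hy
    exact (hasGradientAt_logPotential tetraPoles hy).gradient
  have hHess : fderiv ℝ (gradient (logPotential tetraPoles)) 0
      = (4 / 9 : ℝ) • ContinuousLinearMap.id ℝ (EuclideanSpace ℝ (Fin 3)) := by
    rw [hgrad.fderiv_eq, hasFDerivAt_logPotentialGrad_tetraPoles_zero.fderiv]
  refine ⟨hHess, fun v hv => ?_, isLocalMin_logPotential_tetraPoles_zero⟩
  rw [hHess, smul_apply, ContinuousLinearMap.id_apply, real_inner_smul_right,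
    real_inner_self_eq_norm_sq]
  have := norm_pos_iff.2 hv
  positivity
end
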